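/- Let G be a connected simple graph on n ≥ 3 vertices that is not bipartite. Then α₀(G) < √(⌊n/2⌋·⌈n/2⌉) / (1/(12n²) + 2·√(⌊n/2⌋·⌈n/2⌉)). -/

import Mathlib

open Matrix SimpleGraph

/-- Adjacency matrix of `G` over `ℝ`. -/
noncomputable def adjM {V : Type*} [Fintype V] (G : SimpleGraph V) : Matrix V V ℝ := by
  classical exact G.adjMatrix ℝ

/-- Diagonal matrix of vertex degrees of `G`, over `ℝ`. -/
noncomputable def degM {V : Type*} [Fintype V] (G : SimpleGraph V) : Matrix V V ℝ := by
  classical exact Matrix.diagonal fun v => (G.degree v : ℝ)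

/-- `A_α(G) = α·D(G) + (1-α)·A(G)`. -/
noncomputable def Amix {V : Type*} [Fintype V] (G : SimpleGraph V) (α : ℝ) : Matrix V V ℝ :=
  α • degM G + (1 - α) • adjM G

/-- Smallest eigenvalue of a real symmetric matrix (junk value `0` otherwise). -/
noncomputable def lambdaMin {n : Type*} [Fintype n] (M : Matrix n n ℝ) : ℝ := by
  classical exact if h : M.IsHermitian then ⨅ i, h.eigenvalues i else 0

/-- Largest eigenvalue of a real symmetric matrix (junk value `0` otherwise). -/
noncomputable def lambdaMax {n : Type*} [Fintype n] (M : Matrix n n ℝ) : ℝ := by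
  classical exact if h : M.IsHermitian then ⨆ i, h.eigenvalues i else 0

/-- `α₀(G)`: the smallest `α ∈ [0,1]` such that `A_α(G)` is positive semidefinite. -/
noncomputable def alpha0 {V : Type*} [Fintype V] (G : SimpleGraph V) : ℝ :=
  sInf {α : ℝ | α ∈ Set.Icc (0:ℝ) 1 ∧ (Amix G α).PosSemidef}

/-!
Write `A_α = α (D + A) + (1 - 2α) A`. Splitting `x = x⁺ - x⁻`, the adjacency form satisfies
`xᵀ A x ≥ -2 (∑ x⁺)(∑ x⁻) ≥ -√(⌊n/2⌋⌈n/2⌉) ‖x‖²`, by Cauchy–Schwarz on the disjoint supports of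
`x⁺` and `x⁻`. The signless Laplacian form `xᵀ (D + A) x = ½ ∑_{i ∼ j} (x_i + x_j)²` is at least
`‖x‖² / (3n²)` when `G` is connected and not bipartite: at a vertex `u` maximising `x_u²`, an odd
closed walk through `u` telescopes to `2 x_u`, and one of length `< 2n` using every dart at most
three times exists. So `A_α` is positive semidefinite for `α = s / (1/(3n²) + 2s)`,
`s = √(⌊n/2⌋⌈n/2⌉)`, and this is below the claimed bound.
-/

open Finset

lemma List.sq_sum_le_length_mul_sum_sq {R : Type*} [CommRing R] [LinearOrder R]
    [IsStrictOrderedRing R] (l : List R) : l.sum ^ 2 ≤ l.length * (l.map (· ^ 2)).sum := by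
  have h := sq_sum_le_card_mul_sum_sq (s := univ) (f := fun i : Fin l.length => l[i.1])
  rwa [Fin.sum_univ_getElem, Fin.sum_univ_fun_getElem (f := (· ^ 2)), card_univ,
    Fintype.card_fin] at h

lemma List.sum_map_le_mul_sum_of_count_le {α R : Type*} [DecidableEq α] [Fintype α]
    [CommSemiring R] [PartialOrder R] [IsOrderedRing R] {l : List α} {f : α → R}
    (hf : ∀ a, 0 ≤ f a) {c : ℕ} (hc : ∀ a, l.count a ≤ c) :
    (l.map f).sum ≤ c * ∑ a, f a := by
  rw [sum_list_map_count, mul_sum]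
  calc ∑ a ∈ l.toFinset, l.count a • f a ≤ ∑ a ∈ l.toFinset, (c : R) * f a :=
        sum_le_sum fun a _ => by rw [nsmul_eq_mul]; gcongr; exacts [hf a, hc a]
    _ ≤ ∑ a, (c : R) * f a :=
        sum_le_sum_of_subset_of_nonneg (subset_univ _) fun a _ _ => mul_nonneg c.cast_nonneg (hf a)

lemma Nat.mul_le_div_two_mul_add_one_div_two {p q n : ℕ} (h : p + q ≤ n) :
    p * q ≤ n / 2 * ((n + 1) / 2) := by
  obtain ⟨k, rfl | rfl⟩ := n.even_or_odd'
  · rw [show (2 * k + 1) / 2 = k by omega, show 2 * k / 2 = k by omega]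
    nlinarith [sq_nonneg ((p : ℤ) - q)]
  · rw [show (2 * k + 1 + 1) / 2 = k + 1 by omega, show (2 * k + 1) / 2 = k by omega]
    zify at h ⊢
    have : 4 * ((p : ℤ) * q) ≤ 4 * (k * (k + 1)) + 1 := by nlinarith [sq_nonneg ((p : ℤ) - q)]
    omega

lemma sq_sum_le_card_support_mul_sum_sq {ι : Type*} [Fintype ι] (f : ι → ℝ) :
    (∑ i, f i) ^ 2 ≤ #{i | f i ≠ 0} * ∑ i, f i ^ 2 := by
  rw [← sum_filter_ne_zero]
  refine (sq_sum_le_card_mul_sum_sq).trans (mul_le_mul_of_nonneg_left ?_ (by positivity))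
  exact sum_le_sum_of_subset_of_nonneg (subset_univ _) fun i _ _ => sq_nonneg _

lemma two_mul_mul_le_sqrt_mul_add {S T A B a b F : ℝ}
    (hA : 0 ≤ A) (hB : 0 ≤ B) (ha : 0 ≤ a) (hb : 0 ≤ b)
    (hSA : S ^ 2 ≤ a * A) (hTB : T ^ 2 ≤ b * B) (hab : a * b ≤ F) :
    2 * (S * T) ≤ √F * (A + B) := by
  have hF : 0 ≤ F := (mul_nonneg ha hb).trans hab
  rw [← Real.sqrt_sq (by positivity : 0 ≤ A + B), ← Real.sqrt_mul hF]
  refine Real.le_sqrt_of_sq_le ?_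
  calc (2 * (S * T)) ^ 2 = 4 * (S ^ 2 * T ^ 2) := by ring
    _ ≤ 4 * ((a * A) * (b * B)) := by gcongr
    _ = (a * b) * (4 * (A * B)) := by ring
    _ ≤ F * (A + B) ^ 2 := by gcongr; nlinarith [sq_nonneg (A - B)]

lemma two_mul_sum_posPart_mul_sum_negPart_le {ι : Type*} [Fintype ι] (x : ι → ℝ) :
    2 * ((∑ i, (x i)⁺) * ∑ i, (x i)⁻) ≤
      √((Fintype.card ι / 2 : ℕ) * ((Fintype.card ι + 1) / 2 : ℕ)) * ∑ i, x i ^ 2 := by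
  have hsupp : #{i | (x i)⁺ ≠ 0} + #{i | (x i)⁻ ≠ 0} ≤ Fintype.card ι := by
    rw [← card_univ, ← card_filter_add_card_filter_not (s := univ) (fun i => (x i)⁺ ≠ 0)]
    gcongr with i
    rw [ne_eq, posPart_eq_zero, negPart_eq_zero, not_le]
    exact le_of_lt
  have hsq : ∑ i, x i ^ 2 = ∑ i, (x i)⁺ ^ 2 + ∑ i, (x i)⁻ ^ 2 := by
    rw [← sum_add_distrib]
    refine sum_congr rfl fun i _ => ?_
    rcases le_total (x i) 0 with h | h
    · simp [posPart_of_nonpos h, negPart_of_nonpos h]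
    · simp [posPart_of_nonneg h, negPart_of_nonneg h]
  rw [hsq]
  refine two_mul_mul_le_sqrt_mul_add (by positivity) (by positivity) (by positivity)
    (by positivity) (sq_sum_le_card_support_mul_sum_sq _)
    (sq_sum_le_card_support_mul_sum_sq _) ?_
  exact_mod_cast Nat.mul_le_div_two_mul_add_one_div_two hsupp

lemma neg_two_mul_sum_posPart_mul_sum_negPart_le_dotProduct_mulVec {ι : Type*} [Fintype ι]
    {M : Matrix ι ι ℝ} (h0 : ∀ i j, 0 ≤ M i j) (h1 : ∀ i j, M i j ≤ 1) (x : ι → ℝ) :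
    -(2 * ((∑ i, (x i)⁺) * ∑ i, (x i)⁻)) ≤ x ⬝ᵥ M *ᵥ x := by
  have hterm : ∀ i j, -((x i)⁺ * (x j)⁻ + (x i)⁻ * (x j)⁺) ≤ x i * (M i j * x j) := by
    intro i j
    calc -((x i)⁺ * (x j)⁻ + (x i)⁻ * (x j)⁺)
        ≤ ((x i)⁺ - (x i)⁻) * (M i j * ((x j)⁺ - (x j)⁻)) := by
          have hp := mul_nonneg (posPart_nonneg (x i)) (posPart_nonneg (x j))
          have hn := mul_nonneg (negPart_nonneg (x i)) (negPart_nonneg (x j))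
          have hpn := mul_nonneg (posPart_nonneg (x i)) (negPart_nonneg (x j))
          have hnp := mul_nonneg (negPart_nonneg (x i)) (posPart_nonneg (x j))
          nlinarith [mul_nonneg (h0 i j) hp, mul_nonneg (h0 i j) hn,
            mul_nonneg (sub_nonneg.2 (h1 i j)) hpn, mul_nonneg (sub_nonneg.2 (h1 i j)) hnp]
      _ = x i * (M i j * x j) := by rw [posPart_sub_negPart, posPart_sub_negPart]
  calc -(2 * ((∑ i, (x i)⁺) * ∑ i, (x i)⁻))
      = ∑ i, ∑ j, -((x i)⁺ * (x j)⁻ + (x i)⁻ * (x j)⁺) := by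
        simp only [neg_add, sum_add_distrib, sum_neg_distrib, ← mul_sum, ← sum_mul]; ring
    _ ≤ ∑ i, ∑ j, x i * (M i j * x j) := sum_le_sum fun i _ => sum_le_sum fun j _ => hterm i j
    _ = x ⬝ᵥ M *ᵥ x := by simp only [dotProduct, Matrix.mulVec, mul_sum]

namespace SimpleGraph

section

variable {V : Type*} [Fintype V] (G : SimpleGraph V)

lemma neg_sqrt_mul_sum_sq_le_dotProduct_adjMatrix_mulVec [DecidableRel G.Adj] (x : V → ℝ) :
    -√((Fintype.card V / 2 : ℕ) * ((Fintype.card V + 1) / 2 : ℕ)) * ∑ v, x v ^ 2 ≤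
      x ⬝ᵥ G.adjMatrix ℝ *ᵥ x := by
  refine le_trans ?_ (neg_two_mul_sum_posPart_mul_sum_negPart_le_dotProduct_mulVec
    (fun i j => ?_) (fun i j => ?_) x)
  · rw [neg_mul, neg_le_neg_iff]
    exact two_mul_sum_posPart_mul_sum_negPart_le x
  · rw [adjMatrix_apply]; split_ifs <;> norm_num
  · rw [adjMatrix_apply]; split_ifs <;> norm_num

lemma dotProduct_degMatrix_add_adjMatrix_mulVec {R : Type*} [Field R] [CharZero R]
    [DecidableEq V] [DecidableRel G.Adj] (x : V → R) :
    x ⬝ᵥ (G.degMatrix R + G.adjMatrix R) *ᵥ x =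
      (∑ i, ∑ j, if G.Adj i j then (x i + x j) ^ 2 else 0) / 2 := by
  simp_rw [Matrix.add_mulVec, dotProduct_add, dotProduct_mulVec_degMatrix,
    dotProduct_mulVec_adjMatrix, ← sum_add_distrib, degree_eq_sum_if_adj, sum_mul,
    ite_mul, one_mul, zero_mul, ← sum_add_distrib, ite_add_ite, add_zero]
  rw [← add_self_div_two (∑ i : V, ∑ j : V, _)]
  conv_lhs => enter [1, 2, 2, i, 2, j]; rw [if_congr (G.adj_comm i j) rfl rfl]
  conv_lhs => enter [1, 2]; rw [sum_comm]
  simp_rw [← sum_add_distrib, ite_add_ite]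
  congr 2 with i
  congr 2 with j
  ring_nf

lemma sum_darts_eq_sum_sum_ite {M : Type*} [AddCommMonoid M] [DecidableEq V] [DecidableRel G.Adj]
    (f : V → V → M) :
    ∑ d : G.Dart, f d.fst d.snd = ∑ i, ∑ j, if G.Adj i j then f i j else 0 := by
  rw [← Fintype.sum_prod_type' (f := fun i j => if G.Adj i j then f i j else 0),
    ← sum_filter]
  refine sum_bij (fun d _ => d.toProd) (fun d _ => by simp [d.adj])
    (fun _ _ _ _ h => Dart.ext _ _ h) (fun p hp => ⟨⟨p, by simpa using hp⟩, by simp, rfl⟩)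
    (fun _ _ => rfl)

end

section Walks

variable {V : Type*} {G : SimpleGraph V}

lemma Walk.abs_sub_neg_one_pow_mul_le (x : V → ℝ) {a b : V} (w : G.Walk a b) :
    |x a - (-1) ^ w.length * x b| ≤ (w.darts.map fun d => |x d.fst + x d.snd|).sum := by
  induction w with
  | nil => simp
  | @cons u v c _ p ih =>
    calc |x u - (-1) ^ (p.length + 1) * x c|
        = |(x u + x v) - (x v - (-1) ^ p.length * x c)| := by rw [pow_succ]; ring_nf
      _ ≤ |x u + x v| + |x v - (-1) ^ p.length * x c| := abs_sub _ _
      _ ≤ _ := by simpa using ih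

lemma Walk.four_mul_sq_le_of_odd (x : V → ℝ) {u : V} (w : G.Walk u u) (hw : Odd w.length) :
    4 * x u ^ 2 ≤ w.length * (w.darts.map fun d => (x d.fst + x d.snd) ^ 2).sum := by
  have htel := w.abs_sub_neg_one_pow_mul_le x
  rw [hw.neg_one_pow, neg_one_mul, sub_neg_eq_add, ← two_mul, abs_mul, abs_two] at htel
  have hsum := List.sq_sum_le_length_mul_sum_sq (w.darts.map fun d => |x d.fst + x d.snd|)
  simp only [List.length_map, length_darts, List.map_map, Function.comp_def, sq_abs] at hsum
  calc 4 * x u ^ 2 = (2 * |x u|) ^ 2 := by rw [mul_pow, sq_abs]; norm_num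
    _ ≤ _ := pow_le_pow_left₀ (by positivity) htel 2
    _ ≤ _ := hsum

lemma exists_adj_even_length_add_length (hnbip : ¬ G.Colorable 2) {u : V}
    (p : ∀ v, G.Walk u v) : ∃ a b, G.Adj a b ∧ Even ((p a).length + (p b).length) := by
  by_contra! h
  refine hnbip ⟨Coloring.mk (fun v => ⟨(p v).length % 2, Nat.mod_lt _ two_pos⟩) ?_⟩
  intro a b hab heq
  have := h a b hab
  rw [Nat.even_add, Nat.even_iff, Nat.even_iff] at this
  simp only [Fin.mk.injEq] at heq
  omega

lemma Connected.exists_odd_closed_walk [Fintype V] [DecidableEq V] (hconn : G.Connected)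
    (hnbip : ¬ G.Colorable 2) (u : V) :
    ∃ w : G.Walk u u, Odd w.length ∧ w.length < 2 * Fintype.card V ∧ ∀ d, w.darts.count d ≤ 3 := by
  choose p hp using hconn.preconnected.exists_isPath u
  obtain ⟨a, b, hab, heven⟩ := exists_adj_even_length_add_length hnbip p
  refine ⟨(p a).append (.cons hab (p b).reverse), ?_, ?_, fun d => ?_⟩
  · simp only [Walk.length_append, Walk.length_cons, Walk.length_reverse]
    rw [← add_assoc]
    exact heven.add_one
  · have := (hp a).length_lt; have := (hp b).length_lt
    simp only [Walk.length_append, Walk.length_cons, Walk.length_reverse]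
    omega
  · have ha := List.nodup_iff_count_le_one.1
      (Walk.darts_nodup_of_support_nodup (hp a).support_nodup) d
    have hb := List.nodup_iff_count_le_one.1
      (Walk.darts_nodup_of_support_nodup (hp b).reverse.support_nodup) d
    simp only [Walk.darts_append, Walk.darts_cons, List.count_append, List.count_cons]
    split_ifs <;> omega

end Walks

variable {V : Type*} [Fintype V] [DecidableEq V] {G : SimpleGraph V} [DecidableRel G.Adj]

lemma Connected.inv_mul_sum_sq_le_dotProduct_degMatrix_add_adjMatrix_mulVec (hconn : G.Connected)
    (hnbip : ¬ G.Colorable 2) (x : V → ℝ) :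
    (3 * Fintype.card V ^ 2 : ℝ)⁻¹ * ∑ v, x v ^ 2 ≤ x ⬝ᵥ (G.degMatrix ℝ + G.adjMatrix ℝ) *ᵥ x := by
  set n := Fintype.card V
  have hn : 0 < n := Fintype.card_pos_iff.2 hconn.nonempty
  obtain ⟨u, -, hu⟩ := exists_max_image univ (fun v => x v ^ 2)
    (univ_nonempty_iff.2 hconn.nonempty)
  obtain ⟨w, hodd, hlen, hcount⟩ := hconn.exists_odd_closed_walk hnbip u
  set Q := x ⬝ᵥ (G.degMatrix ℝ + G.adjMatrix ℝ) *ᵥ x with hQ_def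
  have hdarts : ∑ d : G.Dart, (x d.fst + x d.snd) ^ 2 = 2 * Q := by
    rw [sum_darts_eq_sum_sum_ite G (f := fun i j => (x i + x j) ^ 2),
      hQ_def, dotProduct_degMatrix_add_adjMatrix_mulVec]
    ring
  have hQ : 0 ≤ Q := by
    have : 0 ≤ ∑ d : G.Dart, (x d.fst + x d.snd) ^ 2 := by positivity
    linarith
  have hwalk : (w.darts.map fun d => (x d.fst + x d.snd) ^ 2).sum ≤ 3 * (2 * Q) := by
    rw [← hdarts]
    exact_mod_cast List.sum_map_le_mul_sum_of_count_le
      (f := fun d : G.Dart => (x d.fst + x d.snd) ^ 2) (fun _ => sq_nonneg _) hcount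
  have hlen' : (w.length : ℝ) ≤ 2 * n := by exact_mod_cast hlen.le
  have hu2 : 4 * x u ^ 2 ≤ 2 * n * (3 * (2 * Q)) :=
    (w.four_mul_sq_le_of_odd x hodd).trans <|
      mul_le_mul hlen' hwalk (List.sum_nonneg (by simp [sq_nonneg])) (by positivity)
  have hsum : ∑ v, x v ^ 2 ≤ n * x u ^ 2 := by
    simpa using sum_le_sum fun v hv => hu v hv
  rw [inv_mul_le_iff₀ (by positivity)]
  nlinarith

end SimpleGraph

section AlphaZero

variable {V : Type*} [Fintype V] (G : SimpleGraph V)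

lemma adjM_eq_adjMatrix [DecidableRel G.Adj] : adjM G = G.adjMatrix ℝ := by
  unfold adjM; congr!

lemma degM_eq_degMatrix [DecidableEq V] [DecidableRel G.Adj] : degM G = G.degMatrix ℝ := by
  unfold degM SimpleGraph.degMatrix; congr!

lemma Amix_eq [DecidableEq V] [DecidableRel G.Adj] (α : ℝ) :
    Amix G α = α • (G.degMatrix ℝ + G.adjMatrix ℝ) + (1 - 2 * α) • G.adjMatrix ℝ := by
  rw [Amix, degM_eq_degMatrix, adjM_eq_adjMatrix]
  module

lemma alpha0_le_of_forall_le_dotProduct_mulVec [DecidableEq V] [DecidableRel G.Adj] {ε s : ℝ}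
    (hε : 0 < ε) (hs : 0 ≤ s)
    (hQ : ∀ x : V → ℝ, ε * ∑ v, x v ^ 2 ≤ x ⬝ᵥ (G.degMatrix ℝ + G.adjMatrix ℝ) *ᵥ x)
    (hA : ∀ x : V → ℝ, -s * ∑ v, x v ^ 2 ≤ x ⬝ᵥ G.adjMatrix ℝ *ᵥ x) :
    alpha0 G ≤ s / (ε + 2 * s) := by
  set α := s / (ε + 2 * s)
  have hα : α * (ε + 2 * s) = s := div_mul_cancel₀ _ (by positivity)
  have hα0 : 0 ≤ α := by positivity
  have hα2 : 0 ≤ 1 - 2 * α := by nlinarith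
  have hpsd : (Amix G α).PosSemidef := by
    rw [Amix_eq]
    refine .of_dotProduct_mulVec_nonneg ?_ fun x => ?_
    · exact ((G.isHermitian_degMatrix ℝ).add (G.isHermitian_adjMatrix ℝ)).smul (.all α) |>.add
        ((G.isHermitian_adjMatrix ℝ).smul (.all _))
    · rw [star_trivial, Matrix.add_mulVec, Matrix.smul_mulVec, Matrix.smul_mulVec, dotProduct_add,
        dotProduct_smul, dotProduct_smul, smul_eq_mul, smul_eq_mul]
      have hx : 0 ≤ ∑ v, x v ^ 2 := by positivity
      nlinarith [mul_le_mul_of_nonneg_left (hQ x) hα0, mul_le_mul_of_nonneg_left (hA x) hα2]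
  exact csInf_le ⟨0, fun _ h => h.1.1⟩ ⟨⟨hα0, by linarith⟩, hpsd⟩

end AlphaZero

/-- For a connected nonbipartite graph G of order n ≥ 3,
α₀(G) < √(⌊n/2⌋·⌈n/2⌉) / (1/(12n²) + 2·√(⌊n/2⌋·⌈n/2⌉)). -/
theorem stmt_12 {V : Type*} [Fintype V] (G : SimpleGraph V)
    (hconn : G.Connected) (hnbip : ¬ G.Colorable 2)
    (n : ℕ) (hn : n = Fintype.card V) (hn3 : 3 ≤ n) :
    alpha0 G <
      Real.sqrt ((n / 2 : ℕ) * ((n + 1) / 2 : ℕ)) /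
        (1 / (12 * (n : ℝ) ^ 2) + 2 * Real.sqrt ((n / 2 : ℕ) * ((n + 1) / 2 : ℕ))) := by
  classical
  subst hn
  have hs : 0 < √((Fintype.card V / 2 : ℕ) * ((Fintype.card V + 1) / 2 : ℕ) : ℝ) := by
    refine Real.sqrt_pos.2 ?_
    exact_mod_cast Nat.mul_pos (by omega) (by omega)
  calc alpha0 G ≤ _ := alpha0_le_of_forall_le_dotProduct_mulVec G (by positivity) hs.le
        (hconn.inv_mul_sum_sq_le_dotProduct_degMatrix_add_adjMatrix_mulVec hnbip)
        (G.neg_sqrt_mul_sum_sq_le_dotProduct_adjMatrix_mulVec)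
    _ < _ := by
      gcongr
      rw [one_div]
      gcongr
      norm_num
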